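/- arXiv:1906.09639 — 2 statements merged into one kernel-verified Lean document; each statement's English description precedes it below -/
import Mathlib

section
/- Let A be a real n×q matrix and let ℓ be a nonzero real number that is not an eigenvalue of AᵀA. Then ℓ I_n − A Aᵀ is invertible and I_n + A (ℓ I_q − Aᵀ A)^{-1} Aᵀ = ℓ (ℓ I_n − A Aᵀ)^{-1}. -/
/-!
The push-through identity `(ℓ - AB)(1 + A(ℓ - BA)⁻¹B) = ℓ` holds for rectangular `A`, `B` as soon
as `ℓ - BA` is invertible; for `ℓ ≠ 0` it exhibits `ℓ⁻¹(1 + A(ℓ - BA)⁻¹B)` as a right inverse of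
`ℓ - AB`: expanding the product, the cross terms collect into `A(ℓ - BA)(ℓ - BA)⁻¹B = AB`.
With `B = Aᵀ`, the invertibility of `ℓ - AᵀA` is exactly the eigenvalue hypothesis.
-/

open Matrix

namespace Matrix

theorem isUnit_smul_one_sub_of_forall_mulVec_eq_smul {n K : Type*} [Fintype n] [DecidableEq n]
    [Field K] {M : Matrix n n K} {ℓ : K} (h : ∀ v, M *ᵥ v = ℓ • v → v = 0) :
    IsUnit (ℓ • (1 : Matrix n n K) - M) := by
  refine mulVec_injective_iff_isUnit.mp <|
    (injective_iff_map_eq_zero (ℓ • (1 : Matrix n n K) - M).mulVecLin).mpr fun v hv => h v ?_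
  rw [mulVecLin_apply, sub_mulVec, smul_mulVec, one_mulVec, sub_eq_zero] at hv
  exact hv.symm

theorem smul_one_sub_mul_mul_one_add_mul_mul {m n R : Type*} [Fintype m] [Fintype n]
    [DecidableEq m] [DecidableEq n] [CommRing R] {A : Matrix m n R} {B : Matrix n m R}
    {X : Matrix n n R} {ℓ : R} (hX : (ℓ • 1 - B * A) * X = 1) :
    (ℓ • 1 - A * B) * (1 + A * X * B) = ℓ • 1 :=
  calc (ℓ • 1 - A * B) * (1 + A * X * B)
      = ℓ • 1 - A * B + A * ((ℓ • 1 - B * A) * X) * B := by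
        simp only [Matrix.mul_add, Matrix.mul_sub, Matrix.sub_mul, Matrix.mul_smul,
          Matrix.smul_mul, Matrix.mul_assoc, Matrix.one_mul, Matrix.mul_one]
    _ = ℓ • 1 := by rw [hX, Matrix.mul_one, sub_add_cancel]

end Matrix

/-- if `ℓ ≠ 0` is not an eigenvalue of `AᵀA`, then `ℓIₙ - AAᵀ` is
invertible and `Iₙ + A(ℓI_q - AᵀA)⁻¹Aᵀ = ℓ(ℓIₙ - AAᵀ)⁻¹`. -/
theorem statement10 (n q : ℕ) (A : Matrix (Fin n) (Fin q) ℝ) (ℓ : ℝ) (hℓ : ℓ ≠ 0)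
    (hnoteig : ∀ v : Fin q → ℝ, (Aᵀ * A).mulVec v = ℓ • v → v = 0) :
    IsUnit (ℓ • (1 : Matrix (Fin n) (Fin n) ℝ) - A * Aᵀ) ∧
    1 + A * (ℓ • (1 : Matrix (Fin q) (Fin q) ℝ) - Aᵀ * A)⁻¹ * Aᵀ =
      ℓ • (ℓ • (1 : Matrix (Fin n) (Fin n) ℝ) - A * Aᵀ)⁻¹ := by
  have hB := isUnit_smul_one_sub_of_forall_mulVec_eq_smul hnoteig
  have hright : (ℓ • 1 - A * Aᵀ) * (ℓ⁻¹ • (1 + A * (ℓ • 1 - Aᵀ * A)⁻¹ * Aᵀ)) = 1 := by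
    rw [Matrix.mul_smul, smul_one_sub_mul_mul_one_add_mul_mul (mul_nonsing_inv _
      ((isUnit_iff_isUnit_det _).mp hB)), smul_smul, inv_mul_cancel₀ hℓ, one_smul]
  refine ⟨(isUnit_iff_isUnit_det _).mpr (isUnit_det_of_right_inverse hright), ?_⟩
  rw [inv_eq_right_inv hright, smul_smul, mul_inv_cancel₀ hℓ, one_smul]
end

section
/- Let s be a real-valued function that is three times continuously differentiable on an open interval containing z₀, with s'(z₀) ≠ 0. Then lim_{z → z₀, z ≠ z₀} [ 2 ( s'(z) s'(z₀) / (s(z) − s(z₀))² − 1/(z − z₀)² ) ] = ( 2 s'(z₀) s'''(z₀) − 3 (s''(z₀))² ) / ( 6 (s'(z₀))² ). -/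
open MeasureTheory ProbabilityTheory Filter Matrix Topology

noncomputable section

/-- Order-2 Peano remainder. -/
theorem peano2_aux (g : ℝ → ℝ) (z₀ : ℝ)
    (hg : ∀ᶠ z in 𝓝 z₀, HasDerivAt g (deriv g z) z)
    (hg2 : HasDerivAt (deriv g) (deriv (deriv g) z₀) z₀) :
    Tendsto (fun z => (g z - g z₀ - deriv g z₀ * (z - z₀)
        - deriv (deriv g) z₀ / 2 * (z - z₀) ^ 2) / (z - z₀) ^ 2)
      (𝓝[≠] z₀) (𝓝 0) := by
  set d₁ := deriv g z₀ with hd₁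
  set d₂ := deriv (deriv g) z₀ with hd₂
  have hcont : ContinuousAt g z₀ := hg.self_of_nhds.differentiableAt.continuousAt
  have hpow : ∀ z : ℝ, HasDerivAt (fun z : ℝ => (z - z₀) ^ 2) (2 * (z - z₀)) z := fun z => by
    exact (((hasDerivAt_id' z).sub_const z₀).pow 2).congr_deriv (by simp)
  apply HasDerivAt.lhopital_zero_nhdsNE
    (f' := fun z => deriv g z - d₁ - d₂ * (z - z₀))
    (g' := fun z => 2 * (z - z₀))
  · filter_upwards [nhdsWithin_le_nhds hg] with z hz
    have h1 := ((hz.sub_const (g z₀)).sub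
        (((hasDerivAt_id' z).sub_const z₀).const_mul d₁)).sub ((hpow z).const_mul (d₂ / 2))
    refine h1.congr_deriv ?_
    ring
  · filter_upwards with z; exact hpow z
  · filter_upwards [self_mem_nhdsWithin] with z hz
    have hz' : z - z₀ ≠ 0 := sub_ne_zero.mpr hz
    simpa using hz'
  · have h : Tendsto (fun z : ℝ => g z - g z₀ - d₁ * (z - z₀) - d₂ / 2 * (z - z₀) ^ 2)
        (𝓝 z₀) (𝓝 0) := by
      have hc2 : ContinuousAt (fun z : ℝ => g z - g z₀ - d₁ * (z - z₀) - d₂ / 2 * (z - z₀) ^ 2) z₀ :=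
        ((hcont.sub continuousAt_const).sub
          ((continuousAt_id.sub continuousAt_const).const_mul d₁)).sub
          (((continuousAt_id.sub continuousAt_const).pow 2).const_mul (d₂ / 2))
      have h2 := hc2.tendsto
      simpa using h2
    exact h.mono_left nhdsWithin_le_nhds
  · have h : Tendsto (fun z : ℝ => (z - z₀) ^ 2) (𝓝 z₀) (𝓝 0) := by
      simpa using ((tendsto_id.sub (tendsto_const_nhds : Tendsto _ (𝓝 z₀) (𝓝 z₀))).pow 2)
    exact h.mono_left nhdsWithin_le_nhds
  · have hslope : Tendsto (fun z => (deriv g z - d₁) / (z - z₀)) (𝓝[≠] z₀) (𝓝 d₂) := by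
      have h2 := hasDerivAt_iff_tendsto_slope.mp hg2
      exact h2.congr fun z => by rw [slope_def_field]
    have := (hslope.sub (tendsto_const_nhds (α := ℝ) (x := d₂))).div_const 2
    rw [sub_self, zero_div] at this
    apply this.congr'
    filter_upwards [self_mem_nhdsWithin] with z hz
    have hz' : z - z₀ ≠ 0 := sub_ne_zero.mpr hz
    field_simp

/-- Order-3 Peano remainder, from the order-2 one for the derivative. -/
theorem peano3_aux (s : ℝ → ℝ) (z₀ d₂ d₃ : ℝ)
    (hg : ∀ᶠ z in 𝓝 z₀, HasDerivAt s (deriv s z) z)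
    (hB : Tendsto (fun z => (deriv s z - deriv s z₀ - d₂ * (z - z₀)
        - d₃ / 2 * (z - z₀) ^ 2) / (z - z₀) ^ 2) (𝓝[≠] z₀) (𝓝 0)) :
    Tendsto (fun z => (s z - s z₀ - deriv s z₀ * (z - z₀) - d₂ / 2 * (z - z₀) ^ 2
        - d₃ / 6 * (z - z₀) ^ 3) / (z - z₀) ^ 3) (𝓝[≠] z₀) (𝓝 0) := by
  set d₁ := deriv s z₀ with hd₁
  have hcont : ContinuousAt s z₀ := hg.self_of_nhds.differentiableAt.continuousAt
  have hpow : ∀ z : ℝ, HasDerivAt (fun z : ℝ => (z - z₀) ^ 3) (3 * (z - z₀) ^ 2) z := fun z => by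
    exact (((hasDerivAt_id' z).sub_const z₀).pow 3).congr_deriv (by simp)
  apply HasDerivAt.lhopital_zero_nhdsNE
    (f' := fun z => deriv s z - d₁ - d₂ * (z - z₀) - d₃ / 2 * (z - z₀) ^ 2)
    (g' := fun z => 3 * (z - z₀) ^ 2)
  · filter_upwards [nhdsWithin_le_nhds hg] with z hz
    have h1 := (((hz.sub_const (s z₀)).sub
        (((hasDerivAt_id' z).sub_const z₀).const_mul d₁)).sub
        ((((hasDerivAt_id' z).sub_const z₀).pow 2).const_mul (d₂ / 2))).sub
        ((hpow z).const_mul (d₃ / 6))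
    refine h1.congr_deriv ?_
    ring
  · filter_upwards with z; exact hpow z
  · filter_upwards [self_mem_nhdsWithin] with z hz
    have hz' : z - z₀ ≠ 0 := sub_ne_zero.mpr hz
    positivity
  · have hc2 : ContinuousAt (fun z : ℝ => s z - s z₀ - d₁ * (z - z₀) - d₂ / 2 * (z - z₀) ^ 2
        - d₃ / 6 * (z - z₀) ^ 3) z₀ :=
      (((hcont.sub continuousAt_const).sub
        ((continuousAt_id.sub continuousAt_const).const_mul d₁)).sub
        (((continuousAt_id.sub continuousAt_const).pow 2).const_mul (d₂ / 2))).sub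
        (((continuousAt_id.sub continuousAt_const).pow 3).const_mul (d₃ / 6))
    have h2 := hc2.tendsto
    have h3 : Tendsto (fun z : ℝ => s z - s z₀ - d₁ * (z - z₀) - d₂ / 2 * (z - z₀) ^ 2
        - d₃ / 6 * (z - z₀) ^ 3) (𝓝 z₀) (𝓝 0) := by simpa using h2
    exact h3.mono_left nhdsWithin_le_nhds
  · have h : Tendsto (fun z : ℝ => (z - z₀) ^ 3) (𝓝 z₀) (𝓝 0) := by
      simpa using ((tendsto_id.sub (tendsto_const_nhds : Tendsto _ (𝓝 z₀) (𝓝 z₀))).pow 3)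
    exact h.mono_left nhdsWithin_le_nhds
  · have := hB.div_const 3
    rw [zero_div] at this
    apply this.congr'
    filter_upwards [self_mem_nhdsWithin] with z hz
    have hz' : z - z₀ ≠ 0 := sub_ne_zero.mpr hz
    rw [div_div, mul_comm ((z - z₀) ^ 2) 3]


/-- the second-order limit
`lim_{z→z₀} 2(s'(z)s'(z₀)/(s(z)-s(z₀))² - 1/(z-z₀)²)
  = (2s'(z₀)s'''(z₀) - 3 s''(z₀)²)/(6 s'(z₀)²)`
for a `C³` function `s` on an open interval with `s'(z₀) ≠ 0`. -/
theorem statement14 (s : ℝ → ℝ) (z₀ : ℝ) (a b : ℝ)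
    (hz₀ : z₀ ∈ Set.Ioo a b)
    (hs : ContDiffOn ℝ 3 s (Set.Ioo a b))
    (hs' : deriv s z₀ ≠ 0) :
    Tendsto
      (fun z : ℝ =>
        2 * (deriv s z * deriv s z₀ / (s z - s z₀) ^ 2 - 1 / (z - z₀) ^ 2))
      (𝓝[≠] z₀)
      (𝓝 ((2 * deriv s z₀ * iteratedDeriv 3 s z₀ - 3 * (iteratedDeriv 2 s z₀) ^ 2) /
        (6 * (deriv s z₀) ^ 2))) := by
  have hopen : IsOpen (Set.Ioo a b) := isOpen_Ioo
  have hmem : Set.Ioo a b ∈ 𝓝 z₀ := hopen.mem_nhds hz₀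
  have e2 : iteratedDeriv 2 s = deriv (deriv s) := by
    rw [show (2 : ℕ) = 1 + 1 from rfl, iteratedDeriv_succ, iteratedDeriv_one]
  have e3 : iteratedDeriv 3 s = deriv (deriv (deriv s)) := by
    rw [show (3 : ℕ) = 1 + 1 + 1 from rfl, iteratedDeriv_succ, iteratedDeriv_succ,
      iteratedDeriv_one]
  set c₁ := deriv s z₀ with hc₁
  set c₂ := deriv (deriv s) z₀ with hc₂
  set c₃ := deriv (deriv (deriv s)) z₀ with hc₃
  -- differentiability facts
  have hs1 : ContDiffOn ℝ 2 (deriv s) (Set.Ioo a b) := hs.deriv_of_isOpen hopen (by norm_num)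
  have hs2 : ContDiffOn ℝ 1 (deriv (deriv s)) (Set.Ioo a b) :=
    hs1.deriv_of_isOpen hopen (by norm_num)
  have hd1 : ∀ᶠ z in 𝓝 z₀, HasDerivAt s (deriv s z) z := by
    filter_upwards [hmem] with x hx
    exact ((hs.contDiffAt (hopen.mem_nhds hx)).differentiableAt (by norm_num)).hasDerivAt
  have hd2 : ∀ᶠ z in 𝓝 z₀, HasDerivAt (deriv s) (deriv (deriv s) z) z := by
    filter_upwards [hmem] with x hx
    exact ((hs1.contDiffAt (hopen.mem_nhds hx)).differentiableAt (by norm_num)).hasDerivAt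
  have hg2 : HasDerivAt (deriv (deriv s)) c₃ z₀ :=
    ((hs2.contDiffAt hmem).differentiableAt (by norm_num)).hasDerivAt
  -- Peano expansions
  have hB : Tendsto (fun z => (deriv s z - c₁ - c₂ * (z - z₀) - c₃ / 2 * (z - z₀) ^ 2)
      / (z - z₀) ^ 2) (𝓝[≠] z₀) (𝓝 0) := peano2_aux (deriv s) z₀ hd2 hg2
  have hA : Tendsto (fun z => (s z - s z₀ - c₁ * (z - z₀) - c₂ / 2 * (z - z₀) ^ 2
      - c₃ / 6 * (z - z₀) ^ 3) / (z - z₀) ^ 3) (𝓝[≠] z₀) (𝓝 0) :=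
    peano3_aux s z₀ c₂ c₃ hd1 hB
  set A : ℝ → ℝ := fun z => (s z - s z₀ - c₁ * (z - z₀) - c₂ / 2 * (z - z₀) ^ 2
      - c₃ / 6 * (z - z₀) ^ 3) / (z - z₀) ^ 3 with hAdef
  set B : ℝ → ℝ := fun z => (deriv s z - c₁ - c₂ * (z - z₀) - c₃ / 2 * (z - z₀) ^ 2)
      / (z - z₀) ^ 2 with hBdef
  set Q : ℝ → ℝ := fun z => (s z - s z₀) / (z - z₀) with hQdef
  have hh : Tendsto (fun z : ℝ => z - z₀) (𝓝[≠] z₀) (𝓝 0) := by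
    have : Tendsto (fun z : ℝ => z - z₀) (𝓝 z₀) (𝓝 0) := by
      simpa using (tendsto_id.sub (tendsto_const_nhds : Tendsto _ (𝓝 z₀) (𝓝 z₀)))
    exact this.mono_left nhdsWithin_le_nhds
  have hQ : Tendsto Q (𝓝[≠] z₀) (𝓝 c₁) := by
    have h2 := hasDerivAt_iff_tendsto_slope.mp hd1.self_of_nhds
    exact h2.congr fun z => by rw [slope_def_field]
  set L : ℝ := c₁ * c₃ / 6 - c₂ ^ 2 / 4 with hLdef
  have hN : Tendsto (fun z => (deriv s z * c₁ - Q z ^ 2) / (z - z₀) ^ 2) (𝓝[≠] z₀) (𝓝 L) := by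
    have hR : Tendsto (fun z => L + c₁ * B z - 2 * c₁ * A z
        - c₂ * ((c₃ / 6 + A z) * (z - z₀)) - (c₃ / 6 + A z) ^ 2 * (z - z₀) ^ 2)
        (𝓝[≠] z₀) (𝓝 (L + c₁ * 0 - 2 * c₁ * 0 - c₂ * ((c₃ / 6 + 0) * 0)
          - (c₃ / 6 + 0) ^ 2 * 0 ^ 2)) := by
      exact ((((tendsto_const_nhds.add (hB.const_mul c₁)).sub (hA.const_mul (2 * c₁))).sub
        (((tendsto_const_nhds.add hA).mul hh).const_mul c₂)).sub
        (((tendsto_const_nhds.add hA).pow 2).mul (hh.pow 2)))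
    have hR' : Tendsto (fun z => L + c₁ * B z - 2 * c₁ * A z
        - c₂ * ((c₃ / 6 + A z) * (z - z₀)) - (c₃ / 6 + A z) ^ 2 * (z - z₀) ^ 2)
        (𝓝[≠] z₀) (𝓝 L) := by simpa using hR
    apply hR'.congr'
    filter_upwards [self_mem_nhdsWithin] with z hz
    have hz' : z - z₀ ≠ 0 := sub_ne_zero.mpr hz
    simp only [hAdef, hBdef, hQdef, hLdef]
    field_simp
    ring
  have hQne : ∀ᶠ z in 𝓝[≠] z₀, Q z ≠ 0 := hQ.eventually_ne hs'
  have hfinal : Tendsto (fun z => 2 * ((deriv s z * c₁ - Q z ^ 2) / (z - z₀) ^ 2) / Q z ^ 2)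
      (𝓝[≠] z₀) (𝓝 (2 * L / c₁ ^ 2)) :=
    (hN.const_mul 2).div (hQ.pow 2) (pow_ne_zero 2 hs')
  have hval : (2 * c₁ * iteratedDeriv 3 s z₀ - 3 * (iteratedDeriv 2 s z₀) ^ 2)
      / (6 * c₁ ^ 2) = 2 * L / c₁ ^ 2 := by
    rw [e2, e3, ← hc₂, ← hc₃, hLdef]
    field_simp
    ring
  rw [hval]
  apply hfinal.congr'
  filter_upwards [self_mem_nhdsWithin, hQne] with z hz hQz
  have hz' : z - z₀ ≠ 0 := sub_ne_zero.mpr hz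
  have hsz : s z - s z₀ ≠ 0 := by
    intro h0
    apply hQz
    rw [hQdef]; simp [h0]
  simp only [hQdef]
  field_simp

end
end
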